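/- arXiv:2406.02939 — 2 statements merged into one kernel-verified Lean document; each statement's English description precedes it below -/
import Mathlib

section
/- Let $\{x_t\}_{t=0}^{T-1}$ be a sequence of non-negative real numbers with $x_0 > 0$, and let $\alpha \in (0,1)$. Then $\left(\sum_{t=0}^{T-1} x_t\right)^{1-\alpha} \le \sum_{t=0}^{T-1} \frac{x_t}{\left(\sum_{k=0}^{t} x_k\right)^{\alpha}} \le \frac{1}{1-\alpha}\left(\sum_{t=0}^{T-1} x_t\right)^{1-\alpha}$. -/
open Finset

lemma key_ineq (α a b : ℝ) (hα : α ∈ Set.Ioo (0 : ℝ) 1) (ha : 0 ≤ a) (hab : a ≤ b)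
    (hb : 0 < b) :
    (b - a) / b ^ α ≤ (b ^ (1 - α) - a ^ (1 - α)) / (1 - α) := by
  obtain ⟨hα0, hα1⟩ := hα
  have h1 : (0 : ℝ) < 1 - α := by linarith
  rw [div_le_div_iff₀ (Real.rpow_pos_of_pos hb α) h1]
  have hgm : a ^ (1 - α) * b ^ α ≤ (1 - α) * a + α * b :=
    Real.geom_mean_le_arith_mean2_weighted (le_of_lt h1) (le_of_lt hα0) ha hb.le
      (by ring)
  have hbb : b ^ (1 - α) * b ^ α = b := by
    rw [← Real.rpow_add hb]; norm_num
  nlinarith [hgm, hbb]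

theorem stmt_0 (T : ℕ) (x : ℕ → ℝ) (hx : ∀ t, 0 ≤ x t) (hx0 : 0 < x 0)
    (α : ℝ) (hα : α ∈ Set.Ioo (0 : ℝ) 1) :
    (∑ t ∈ Finset.range T, x t) ^ (1 - α) ≤
      ∑ t ∈ Finset.range T, x t / (∑ k ∈ Finset.range (t + 1), x k) ^ α ∧
    ∑ t ∈ Finset.range T, x t / (∑ k ∈ Finset.range (t + 1), x k) ^ α ≤
      (1 / (1 - α)) * (∑ t ∈ Finset.range T, x t) ^ (1 - α) := by
  obtain ⟨hα0, hα1⟩ := hα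
  have h1 : (0 : ℝ) < 1 - α := by linarith
  set S : ℕ → ℝ := fun n => ∑ k ∈ Finset.range n, x k with hS
  have hSnn : ∀ n, 0 ≤ S n := fun n => Finset.sum_nonneg fun i _ => hx i
  have hSmono : Monotone S := fun m n hmn =>
    Finset.sum_le_sum_of_subset_of_nonneg (Finset.range_subset_range.2 hmn) fun i _ _ => hx i
  have hSpos : ∀ n, 0 < S (n + 1) := by
    intro n
    have : x 0 ≤ S (n + 1) :=
      Finset.single_le_sum (fun i _ => hx i) (Finset.mem_range.2 (Nat.succ_pos n))
    linarith
  constructor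
  · -- lower bound
    rcases Nat.eq_zero_or_pos T with hT | hT
    · subst hT
      simp [Real.zero_rpow (ne_of_gt h1)]
    · have hST : 0 < S T := by
        obtain ⟨n, rfl⟩ := Nat.exists_eq_add_of_lt hT
        simpa using hSpos n
      have : S T ^ (1 - α) = ∑ t ∈ Finset.range T, x t / S T ^ α := by
        rw [← Finset.sum_div, Real.rpow_sub hST, Real.rpow_one]
      rw [show (∑ t ∈ Finset.range T, x t) = S T from rfl, this]
      apply Finset.sum_le_sum
      intro t ht
      apply div_le_div_of_nonneg_left (hx t) (Real.rpow_pos_of_pos (hSpos t) α)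
      exact Real.rpow_le_rpow (hSnn _) (hSmono (Finset.mem_range.1 ht)) hα0.le
  · -- upper bound, by induction
    induction T with
    | zero => positivity
    | succ n ih =>
      rw [Finset.sum_range_succ]
      have hkey : x n / S (n + 1) ^ α ≤
          (1 / (1 - α)) * (S (n + 1) ^ (1 - α) - S n ^ (1 - α)) := by
        have hxn : x n = S (n + 1) - S n := by
          simp [hS, Finset.sum_range_succ]
        rw [hxn, one_div, inv_mul_eq_div]
        exact key_ineq α (S n) (S (n + 1)) ⟨hα0, hα1⟩ (hSnn n)
          (hSmono (Nat.le_succ n)) (hSpos n)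
      have := ih
      show (∑ t ∈ Finset.range n, x t / S (t + 1) ^ α) + x n / S (n + 1) ^ α ≤
          (1 / (1 - α)) * S (n + 1) ^ (1 - α)
      calc (∑ t ∈ Finset.range n, x t / S (t + 1) ^ α) + x n / S (n + 1) ^ α
          ≤ (1 / (1 - α)) * S n ^ (1 - α) +
            (1 / (1 - α)) * (S (n + 1) ^ (1 - α) - S n ^ (1 - α)) := by
            exact add_le_add this hkey
        _ = (1 / (1 - α)) * S (n + 1) ^ (1 - α) := by ring
end

section
/- Let $\{x_t\}_{t=0}^{T-1}$ be a sequence of non-negative real numbers with $x_0 > 0$. Then $\sum_{t=0}^{T-1} \frac{x_t}{\sum_{k=0}^{t} x_k} \le 1 + \log\left(\frac{\sum_{t=0}^{T-1} x_t}{x_0}\right)$. -/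
theorem stmt_1 (T : ℕ) (x : ℕ → ℝ) (hx : ∀ t, 0 ≤ x t) (hx0 : 0 < x 0) :
    ∑ t ∈ Finset.range T, x t / (∑ k ∈ Finset.range (t + 1), x k) ≤
      1 + Real.log ((∑ t ∈ Finset.range T, x t) / x 0) := by
  have hSpos : ∀ n : ℕ, 1 ≤ n → 0 < ∑ k ∈ Finset.range n, x k := by
    intro n hn
    have : x 0 ≤ ∑ k ∈ Finset.range n, x k :=
      Finset.single_le_sum (fun i _ => hx i) (Finset.mem_range.mpr hn)
    linarith
  induction T with
  | zero =>
    simp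
  | succ T ih =>
    rw [Finset.sum_range_succ]
    rcases Nat.eq_zero_or_pos T with hT | hT
    · subst hT
      simp [div_self hx0.ne']
    · have hST : 0 < ∑ k ∈ Finset.range T, x k := hSpos T hT
      have hST1 : 0 < ∑ k ∈ Finset.range (T + 1), x k := hSpos (T + 1) (by omega)
      have hmono : (∑ k ∈ Finset.range T, x k) ≤ ∑ k ∈ Finset.range (T + 1), x k := by
        rw [Finset.sum_range_succ]; linarith [hx T]
      -- key: x T / S(T+1) ≤ log (S(T+1)) - log (S T)
      have key : x T / (∑ k ∈ Finset.range (T + 1), x k) ≤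
          Real.log (∑ k ∈ Finset.range (T + 1), x k) - Real.log (∑ k ∈ Finset.range T, x k) := by
        have h1 : Real.log ((∑ k ∈ Finset.range T, x k) / (∑ k ∈ Finset.range (T + 1), x k)) ≤
            (∑ k ∈ Finset.range T, x k) / (∑ k ∈ Finset.range (T + 1), x k) - 1 :=
          Real.log_le_sub_one_of_pos (div_pos hST hST1)
        rw [Real.log_div hST.ne' hST1.ne'] at h1
        have h2 : x T / (∑ k ∈ Finset.range (T + 1), x k) =
            1 - (∑ k ∈ Finset.range T, x k) / (∑ k ∈ Finset.range (T + 1), x k) := by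
          field_simp
          rw [Finset.sum_range_succ]; ring
        rw [h2]; linarith
      have hlog : Real.log ((∑ k ∈ Finset.range T, x k) / x 0) =
          Real.log (∑ k ∈ Finset.range T, x k) - Real.log (x 0) :=
        Real.log_div hST.ne' hx0.ne'
      have hlog1 : Real.log ((∑ k ∈ Finset.range (T + 1), x k) / x 0) =
          Real.log (∑ k ∈ Finset.range (T + 1), x k) - Real.log (x 0) :=
        Real.log_div hST1.ne' hx0.ne'
      linarith [ih]
end
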